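/- Let G = (V, E) be a finite simple graph and F₁ = ∏_{v ∈ V} f₁(v) a partition-box defined by a finite measurable partition P of [0,1] into sets of positive measure and a function f₁ : V → P. Let Q ∈ P, let U be the union of an arbitrary set of classes of P, and let d be a positive non-integer real number. Split Q into two parts of positive measure Q⁺ and Q⁻. For v ∈ V let deg(v, U) be the number of neighbors u of v with f₁(u) ⊆ U. Define f₂(v) = f₁(v) if f₁(v) ≠ Q; f₂(v) = Q⁺ if f₁(v) = Q and deg(v, U) > d; f₂(v) = Q⁻ if f₁(v) = Q and deg(v, U) < d; and let F₂ = ∏_{v ∈ V} f₂(v). Then there exists a pair (W, ω) with W : [0,1]² → [0,1] measurable and ω : [0,1] → [0,∞) bounded measurable that emphasizes F₂ from F₁, i.e., with s = sup_{p ∈ F₁} (∏_{v ∈ V} ω(p(v)) · ∏_{(a,b) ∈ E} W(p(a), p(b))), the set of p ∈ F₁ attaining s is exactly F₂, and F₂ has positive Lebesgue measure. -/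

import Mathlib

/-
Take `ω = (1/2)^d` on `Q⁺` and `1` elsewhere, and `W(x, y) = g(x, y) g(y, x)` with `g = 1/2` on
`Q⁻ × U` and `1` elsewhere. Each edge factor `g(p a, p b) g(p b, p a)` splits between its two
endpoints, so on `F₁` the weight of `p` is a product of vertex factors: `(1/2)^d` if `p v ∈ Q⁺`,
`(1/2)^deg(v, U)` if `p v ∈ Q⁻`, and `1` otherwise. Since `d` is not an integer, the factor of `v`
is maximised on its cell exactly on `f₂ v`, hence the product is maximised exactly on `F₂`.
-/


open MeasureTheory

noncomputable section

/-- The unit interval `[0,1]` as a measure space. -/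
abbrev UI : Type := Set.Icc (0:ℝ) 1

/-- A kernel is a symmetric bounded measurable function `[0,1]² → ℝ`. -/
def IsKernel (W : UI → UI → ℝ) : Prop :=
  Measurable (Function.uncurry W) ∧ (∀ x y, W x y = W y x) ∧ ∃ C : ℝ, ∀ x y, |W x y| ≤ C

/-- A weight function is a bounded measurable function `[0,1] → (0,∞)`. -/
def IsWeight (ω : UI → ℝ) : Prop :=
  Measurable ω ∧ (∀ x, 0 < ω x) ∧ ∃ C : ℝ, ∀ x, ω x ≤ C

open scoped Classical in
/-- The weight of a map `p : V → [0,1]`: `∏_{v ∈ V} ω(p(v)) · ∏_{(a,b) ∈ E} W(p(a),p(b))`. -/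
noncomputable def mapWeight {V : Type} [Fintype V] (G : SimpleGraph V) (W : UI → UI → ℝ)
    (ω : UI → ℝ) (p : V → UI) : ℝ :=
  (∏ v, ω (p v)) * ∏ e ∈ G.edgeFinset, W (p (Quot.out e).1) (p (Quot.out e).2)

/-- `t(G, W, ω, F) = ∫_F ∏_{v ∈ V} ω(p(v)) · ∏_{(a,b) ∈ E} W(p(a),p(b)) dp`. -/
noncomputable def tF {V : Type} [Fintype V] (G : SimpleGraph V) (W : UI → UI → ℝ)
    (ω : UI → ℝ) (F : Set (V → UI)) : ℝ :=
  ∫ p in F, mapWeight G W ω p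

/-- `G` is `F`-positive if `t(G, W, ω, F) ≥ 0` for every kernel `W` and weight `ω`. -/
def FPositive {V : Type} [Fintype V] (G : SimpleGraph V) (F : Set (V → UI)) : Prop :=
  ∀ (W : UI → UI → ℝ) (ω : UI → ℝ), IsKernel W → IsWeight ω → 0 ≤ tF G W ω F

namespace SimpleGraph

variable {V M : Type*} [Fintype V] [CommMonoid M] (G : SimpleGraph V) [DecidableRel G.Adj]

theorem prod_dart_eq_prod_prod_neighborFinset (f : V → V → M) :
    ∏ d : G.Dart, f d.fst d.snd = ∏ v, ∏ u ∈ G.neighborFinset v, f v u := by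
  let e : G.Dart ≃ Σ v, G.neighborSet v :=
    { toFun := fun d => ⟨d.fst, d.snd, d.adj⟩
      invFun := fun s => ⟨(s.1, s.2), s.2.2⟩ }
  rw [Fintype.prod_equiv e (fun d => f d.fst d.snd) (fun s => f s.1 s.2) fun _ => rfl,
    Fintype.prod_sigma]
  exact Finset.prod_congr rfl fun v _ =>
    (Finset.prod_subtype _ (mem_neighborFinset G v) (f v)).symm

theorem prod_edgeFinset_mul_swap_eq_prod_dart [Fintype G.edgeSet] (g : V → V → M) :
    ∏ e ∈ G.edgeFinset, g e.out.1 e.out.2 * g e.out.2 e.out.1 = ∏ d : G.Dart, g d.fst d.snd := by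
  classical
  rw [← Finset.prod_fiberwise_of_maps_to (g := Dart.edge) (t := G.edgeFinset)
    (fun d _ => mem_edgeFinset.2 d.edge_mem)]
  refine Finset.prod_congr rfl fun e he => ?_
  have hout : s(e.out.1, e.out.2) = e := Quot.out_eq e
  let d₀ : G.Dart := ⟨e.out, by rw [← mem_edgeSet, hout]; exact mem_edgeFinset.1 he⟩
  have hfiber : ({d : G.Dart | d.edge = e} : Finset _) = {d₀, d₀.symm} :=
    hout ▸ d₀.edge_fiber
  rw [hfiber, Finset.prod_pair d₀.symm_ne.symm]
  rfl

end SimpleGraph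

theorem mem_biUnion_iff_of_mem {ι α : Type*} {P : ι → Set α}
    (hP : Pairwise (Function.onFun Disjoint P)) {T : Set ι} {i : ι} {x : α} (hx : x ∈ P i) :
    x ∈ ⋃ j ∈ T, P j ↔ i ∈ T := by
  simp only [Set.mem_iUnion₂]
  exact ⟨fun ⟨j, hj, hxj⟩ => (hP.eq (Set.not_disjoint_iff.2 ⟨x, hx, hxj⟩)) ▸ hj,
    fun hi => ⟨i, hi, hx⟩⟩

section Argmax

variable {α β : Type*}

theorem sep_eq_sSup_image_eq_sep_isMaxOn [ConditionallyCompleteLattice β] {φ : α → β}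
    {S : Set α} (h : {p ∈ S | IsMaxOn φ S p}.Nonempty) :
    {p ∈ S | φ p = sSup (φ '' S)} = {p ∈ S | IsMaxOn φ S p} := by
  obtain ⟨a, haS, ha⟩ := h
  rw [IsGreatest.csSup_eq ⟨Set.mem_image_of_mem φ haS, Set.forall_mem_image.2 ha⟩]
  exact Set.sep_ext_iff.2 fun p hp =>
    ⟨fun hpa x hx => hpa ▸ ha hx, fun hpmax => le_antisymm (ha hp) (hpmax haS)⟩

theorem sep_isMaxOn_union_eq_left [Preorder β] {f : α → β} {A B : Set α} {a b : β}
    (hA : A.Nonempty) (hfA : ∀ x ∈ A, f x = a) (hfB : ∀ x ∈ B, f x = b) (hba : b < a) :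
    {x ∈ A ∪ B | IsMaxOn f (A ∪ B) x} = A := by
  ext x
  refine ⟨fun ⟨hx, hmax⟩ => hx.resolve_right fun hxB => ?_, fun hxA => ⟨Or.inl hxA, ?_⟩⟩
  · obtain ⟨y, hy⟩ := hA
    exact hba.not_ge (hfA y hy ▸ hfB x hxB ▸ hmax (Or.inl hy))
  · rintro y (hy | hy)
    · exact (hfA y hy).trans (hfA x hxA).symm |>.le
    · exact (hfB y hy).trans_le hba.le |>.trans (hfA x hxA).symm.le

theorem sep_isMaxOn_prod_eq_pi {ι R : Type*} [Fintype ι] [CommSemiring R] [PartialOrder R]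
    [IsStrictOrderedRing R] {S : ι → Set α} {h : ι → α → R}
    (hpos : ∀ i, ∀ x ∈ S i, 0 < h i x) (hmax : ∀ i, {x ∈ S i | IsMaxOn (h i) (S i) x}.Nonempty) :
    {p ∈ Set.univ.pi S | IsMaxOn (fun p => ∏ i, h i (p i)) (Set.univ.pi S) p} =
      Set.univ.pi fun i => {x ∈ S i | IsMaxOn (h i) (S i) x} := by
  choose a haS ha using hmax
  ext p
  simp only [Set.mem_ofPred_eq, Set.mem_univ_pi]
  constructor
  · rintro ⟨hp, hpmax⟩ i
    have hle : ∀ j, h j (p j) ≤ h j (a j) := fun j => ha j (hp j)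
    have heq : h i (p i) = h i (a i) := by
      by_contra hne
      refine (hpmax (Set.mem_univ_pi.2 haS)).not_gt ?_
      exact Finset.prod_lt_prod (fun j _ => hpos j _ (hp j)) (fun j _ => hle j)
        ⟨i, Finset.mem_univ i, (hle i).lt_of_ne hne⟩
    exact ⟨hp i, fun x hx => heq ▸ ha i hx⟩
  · intro hp
    refine ⟨fun i => (hp i).1, fun p' hp' => ?_⟩
    exact Finset.prod_le_prod (fun j _ => (hpos j _ (Set.mem_univ_pi.1 hp' j)).le)
      fun j _ => (hp j).2 (Set.mem_univ_pi.1 hp' j)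

end Argmax

section Construction

variable {α : Type*}

open scoped Classical in
def halfOn (A B : Set α) (x y : α) : ℝ :=
  if x ∈ A ∧ y ∈ B then 1 / 2 else 1

open scoped Classical in
def splitWeight (Qp : Set α) (d : ℝ) (x : α) : ℝ :=
  if x ∈ Qp then (1 / 2) ^ d else 1

open scoped Classical in
def vertexWeight (Qp Qm : Set α) (d : ℝ) (n : ℕ) (x : α) : ℝ :=
  splitWeight Qp d x * if x ∈ Qm then (1 / 2) ^ n else 1

theorem measurable_halfOn_mul_swap [MeasurableSpace α] {A B : Set α} (hA : MeasurableSet A)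
    (hB : MeasurableSet B) :
    Measurable (Function.uncurry fun x y => halfOn A B x y * halfOn A B y x) :=
  have hg : Measurable (Function.uncurry (halfOn A B)) :=
    Measurable.ite (hA.prod hB) measurable_const measurable_const
  hg.mul (hg.comp measurable_swap)

theorem halfOn_mem_unitInterval (A B : Set α) (x y : α) : halfOn A B x y ∈ unitInterval := by
  unfold halfOn
  split_ifs <;> norm_num

theorem measurable_splitWeight [MeasurableSpace α] {Qp : Set α} (hQp : MeasurableSet Qp)
    (d : ℝ) : Measurable (splitWeight Qp d) :=
  Measurable.ite hQp measurable_const measurable_const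

theorem splitWeight_pos (Qp : Set α) (d : ℝ) (x : α) : 0 < splitWeight Qp d x := by
  unfold splitWeight
  split_ifs <;> positivity

theorem splitWeight_le (Qp : Set α) (d : ℝ) (x : α) :
    splitWeight Qp d x ≤ max ((1 / 2) ^ d) 1 := by
  unfold splitWeight
  split_ifs <;> simp

theorem vertexWeight_pos (Qp Qm : Set α) (d : ℝ) (n : ℕ) (x : α) :
    0 < vertexWeight Qp Qm d n x :=
  mul_pos (splitWeight_pos Qp d x) (by split_ifs <;> positivity)

open scoped Classical in
theorem prod_halfOn {ι : Type*} (A B : Set α) (s : Finset ι) (x : α) (p : ι → α) :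
    ∏ u ∈ s, halfOn A B x (p u) = if x ∈ A then (1 / 2) ^ {u ∈ s | p u ∈ B}.card else 1 := by
  by_cases hx : x ∈ A <;> simp [halfOn, hx, Finset.prod_ite]

theorem mapWeight_mul_swap {V : Type} [Fintype V] (G : SimpleGraph V) [DecidableRel G.Adj]
    (g : UI → UI → ℝ) (ω : UI → ℝ) (p : V → UI) :
    mapWeight G (fun x y => g x y * g y x) ω p =
      ∏ v, ω (p v) * ∏ u ∈ G.neighborFinset v, g (p v) (p u) := by
  rw [Finset.prod_mul_distrib,
    ← G.prod_dart_eq_prod_prod_neighborFinset fun a b => g (p a) (p b), mapWeight]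
  congr 1
  convert G.prod_edgeFinset_mul_swap_eq_prod_dart fun a b => g (p a) (p b)

theorem mapWeight_halfOn_eq_prod_vertexWeight {V : Type} [Fintype V] (G : SimpleGraph V)
    {ι : Type*} {P : ι → Set UI} (hP : Pairwise (Function.onFun Disjoint P)) {f₁ : V → ι}
    (T : Set ι) (Qp Qm : Set UI) (d : ℝ) {p : V → UI} (hp : ∀ v, p v ∈ P (f₁ v)) :
    mapWeight G (fun x y => halfOn Qm (⋃ i ∈ T, P i) x y * halfOn Qm (⋃ i ∈ T, P i) y x)
        (splitWeight Qp d) p =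
      ∏ v, vertexWeight Qp Qm d (Nat.card {u : V // G.Adj v u ∧ f₁ u ∈ T}) (p v) := by
  classical
  rw [mapWeight_mul_swap]
  refine Finset.prod_congr rfl fun v _ => ?_
  rw [prod_halfOn, vertexWeight, Nat.card_eq_fintype_card, Fintype.card_subtype]
  congr 4
  ext u
  simp only [Finset.mem_filter, Finset.mem_univ, true_and, SimpleGraph.mem_neighborFinset,
    mem_biUnion_iff_of_mem hP (hp u)]

open scoped Classical in
def refinedCell {ι : Type*} (P : ι → Set α) (q : ι) (Qp Qm : Set α) (d : ℝ) (i : ι) (n : ℕ) :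
    Set α :=
  if i = q then (if d < n then Qp else Qm) else P i

theorem eq_refinedCell {ι : Type*} {P : ι → Set α} {i q : ι} {Qp Qm S : Set α} {d : ℝ} {n : ℕ}
    (hdn : d ≠ n) (hS : (i ≠ q → S = P i) ∧ (i = q → (d < n → S = Qp) ∧ (n < d → S = Qm))) :
    S = refinedCell P q Qp Qm d i n := by
  unfold refinedCell
  split_ifs with hi hdn'
  · exact (hS.2 hi).1 hdn'
  · exact (hS.2 hi).2 ((not_lt.1 hdn').lt_of_ne hdn.symm)
  · exact hS.1 hi

theorem measure_refinedCell_pos [MeasurableSpace α] {μ : Measure α} {ι : Type*} {P : ι → Set α}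
    (hP : ∀ i, 0 < μ (P i)) (q : ι) {Qp Qm : Set α} (hQp : 0 < μ Qp) (hQm : 0 < μ Qm) (d : ℝ)
    (i : ι) (n : ℕ) : 0 < μ (refinedCell P q Qp Qm d i n) := by
  unfold refinedCell
  split_ifs
  exacts [hQp, hQm, hP i]

theorem refinedCell_eq_sep_isMaxOn {ι : Type*} {P : ι → Set α}
    (hP : Pairwise (Function.onFun Disjoint P)) {i q : ι} {Qp Qm : Set α} (hQp : Qp.Nonempty)
    (hQm : Qm.Nonempty) (hQdisj : Disjoint Qp Qm) (hQunion : Qp ∪ Qm = P q) {d : ℝ} {n : ℕ}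
    (hdn : d ≠ n) :
    refinedCell P q Qp Qm d i n = {x ∈ P i | IsMaxOn (vertexWeight Qp Qm d n) (P i) x} := by
  have hp : ∀ x ∈ Qp, vertexWeight Qp Qm d n x = (1 / 2) ^ d := fun x hx => by
    simp [vertexWeight, splitWeight, hx, hQdisj.notMem_of_mem_left hx]
  have hm : ∀ x ∈ Qm, vertexWeight Qp Qm d n x = (1 / 2) ^ (n : ℝ) := fun x hx => by
    simp [vertexWeight, splitWeight, hx, hQdisj.notMem_of_mem_right hx]
  have hlt : ∀ a b : ℝ, (1 / 2 : ℝ) ^ a < (1 / 2) ^ b ↔ b < a := fun a b =>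
    Real.rpow_lt_rpow_left_iff_of_base_lt_one (by norm_num) (by norm_num)
  unfold refinedCell
  split_ifs with hi hdn'
  · subst hi
    rw [← hQunion]
    exact (sep_isMaxOn_union_eq_left hQp hp hm ((hlt n d).2 hdn')).symm
  · subst hi
    rw [← hQunion, Set.union_comm]
    exact (sep_isMaxOn_union_eq_left hQm hm hp
      ((hlt d n).2 ((not_lt.1 hdn').lt_of_ne hdn.symm))).symm
  · have hone : ∀ x ∈ P i, vertexWeight Qp Qm d n x = 1 := fun x hx => by
      have hxq : x ∉ Qp ∪ Qm := hQunion ▸ (hP hi).notMem_of_mem_left hx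
      simp only [Set.mem_union, not_or] at hxq
      simp [vertexWeight, splitWeight, hxq.1, hxq.2]
    ext x
    exact ⟨fun hx => ⟨hx, isMaxOn_iff.2 fun y hy => ((hone y hy).trans (hone x hx).symm).le⟩,
      And.left⟩

end Construction

theorem exists_emphasizing_pair {V : Type} [Fintype V] (G : SimpleGraph V)
    {ι : Type} [Fintype ι] (P : ι → Set UI)
    (hPmeas : ∀ i, MeasurableSet (P i)) (hPpos : ∀ i, 0 < volume (P i))
    (hPdisj : Pairwise (Function.onFun Disjoint P))
    (f₁ : V → ι) (q : ι) (T : Set ι)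
    (d : ℝ) (hdnotint : ∀ n : ℤ, d ≠ (n : ℝ))
    (Qp Qm : Set UI) (hQpmeas : MeasurableSet Qp) (hQmmeas : MeasurableSet Qm)
    (hQppos : 0 < volume Qp) (hQmpos : 0 < volume Qm)
    (hQdisj : Disjoint Qp Qm) (hQunion : Qp ∪ Qm = P q)
    (degU : V → ℕ) (hdegU : ∀ v, degU v = Nat.card {u : V // G.Adj v u ∧ f₁ u ∈ T})
    (f₂ : V → Set UI)
    (hf₂ : ∀ v,
      (f₁ v ≠ q → f₂ v = P (f₁ v)) ∧
      (f₁ v = q → ((d < (degU v : ℝ) → f₂ v = Qp) ∧ ((degU v : ℝ) < d → f₂ v = Qm))))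
    (F₁ F₂ : Set (V → UI))
    (hF₁ : F₁ = {p | ∀ v, p v ∈ P (f₁ v)})
    (hF₂ : F₂ = {p | ∀ v, p v ∈ f₂ v}) :
    ∃ (W : UI → UI → ℝ) (ω : UI → ℝ),
      Measurable (Function.uncurry W) ∧ (∀ x y, W x y ∈ Set.Icc (0:ℝ) 1) ∧
      Measurable ω ∧ (∀ x, 0 ≤ ω x) ∧ (∃ C : ℝ, ∀ x, ω x ≤ C) ∧
      0 < volume F₂ ∧
      {p ∈ F₁ | mapWeight G W ω p = sSup (mapWeight G W ω '' F₁)} = F₂ := by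
  have hdn : ∀ v, d ≠ degU v := fun v => by exact_mod_cast hdnotint (degU v)
  have hcell : ∀ v, f₂ v = refinedCell P q Qp Qm d (f₁ v) (degU v) :=
    fun v => eq_refinedCell (hdn v) (hf₂ v)
  have hvol : ∀ v, 0 < volume (f₂ v) :=
    fun v => hcell v ▸ measure_refinedCell_pos hPpos q hQppos hQmpos d (f₁ v) (degU v)
  have hF₁pi : F₁ = Set.univ.pi fun v => P (f₁ v) := by simp [hF₁, Set.pi]
  have hF₂pi : F₂ = Set.univ.pi f₂ := by simp [hF₂, Set.pi]
  have hF₂pos : 0 < volume F₂ := by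
    rw [hF₂pi, volume_pi_pi]
    exact CanonicallyOrderedAdd.prod_pos.2 fun v _ => hvol v
  have hmax : ∀ v,
      f₂ v = {x ∈ P (f₁ v) | IsMaxOn (vertexWeight Qp Qm d (degU v)) (P (f₁ v)) x} :=
    fun v => (hcell v).trans <| refinedCell_eq_sep_isMaxOn hPdisj
      (nonempty_of_measure_ne_zero hQppos.ne') (nonempty_of_measure_ne_zero hQmpos.ne')
      hQdisj hQunion (hdn v)
  have hargmax :
      {p ∈ F₁ | IsMaxOn (fun p => ∏ v, vertexWeight Qp Qm d (degU v) (p v)) F₁ p} = F₂ := by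
    rw [hF₁pi, sep_isMaxOn_prod_eq_pi (fun v x _ => vertexWeight_pos _ _ _ _ x)
      fun v => hmax v ▸ nonempty_of_measure_ne_zero (hvol v).ne', hF₂pi, funext hmax]
  have hweight : Set.EqOn
      (mapWeight G (fun x y => halfOn Qm (⋃ i ∈ T, P i) x y * halfOn Qm (⋃ i ∈ T, P i) y x)
        (splitWeight Qp d))
      (fun p => ∏ v, vertexWeight Qp Qm d (degU v) (p v)) F₁ := fun p hp => by
    rw [hF₁] at hp
    simp only [mapWeight_halfOn_eq_prod_vertexWeight G hPdisj T Qp Qm d hp, hdegU]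
  refine ⟨_, _, measurable_halfOn_mul_swap hQmmeas
      (MeasurableSet.biUnion T.to_countable fun i _ => hPmeas i),
    fun x y => unitInterval.mul_mem (halfOn_mem_unitInterval _ _ _ _)
      (halfOn_mem_unitInterval _ _ _ _),
    measurable_splitWeight hQpmeas d, fun x => (splitWeight_pos Qp d x).le,
    ⟨_, splitWeight_le Qp d⟩, hF₂pos, ?_⟩
  rw [hweight.image_eq, Set.sep_ext_iff.2 fun p hp => by rw [hweight hp],
    sep_eq_sSup_image_eq_sep_isMaxOn (hargmax ▸ nonempty_of_measure_ne_zero hF₂pos.ne'), hargmax]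

end
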